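/- arXiv:0711.0451 — 2 statements merged into one kernel-verified Lean document; each statement's English description precedes it below -/
import Mathlib

section
/- Let f ∈ L_p[0,1] (1 ≤ p < ∞) be self-similar of zero spectral order, let S(x) = a_{k̂}x + α_{k̂}, and let G^m(0) denote the m-th iterate of G applied to the zero function. Then for every m ≥ 1, f coincides almost everywhere with G^m(0) on the complement [0,1]∖S^m([0,1]) of the nested interval S^m([0,1]) (which has length a_{k̂}^m). -/
open MeasureTheory Set Filter
open scoped ENNReal NNReal

/-- Breakpoints: `alphaOf a k = α_k = ∑_{i=1}^{k-1} a_i`, so `α_1 = 0`. -/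
noncomputable def alphaOf (a : ℕ → ℝ) (k : ℕ) : ℝ := ∑ i ∈ Finset.Ico 1 k, a i

/-- The similarity operator `G`: on `(α_k, α_{k+1})` it takes the value
`β_k + d_k · f((x − α_k)/a_k)`, and `0` outside `⋃ (α_k, α_{k+1})`. -/
noncomputable def simOp (n : ℕ) (a d β : ℕ → ℝ) (f : ℝ → ℝ) : ℝ → ℝ :=
  fun x => ∑ k ∈ Finset.Icc 1 n,
    Set.indicator (Set.Ioo (alphaOf a k) (alphaOf a (k + 1)))
      (fun y => β k + d k * f ((y - alphaOf a k) / a k)) x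

/-!
Only the `k̂`-th piece of `G` depends on its argument, and on it `G g x` depends only on
`g (S⁻¹ x)`. Since `f = G f` a.e. on `[0,1]` and affine maps preserve null sets, agreement
`f = h` a.e. on `[0,1] \ J` therefore gives `f = G h` a.e. on `[0,1] \ S(J)`. Starting from
`J = [0,1]`, where there is nothing to prove, induction yields `f = Gᵐ h₀` a.e. off `Sᵐ([0,1])`
for every starting function `h₀`; the length of `Sᵐ([0,1])` is read off `Sᵐ x = a_k̂ᵐ x + Sᵐ 0`.
-/

lemma alphaOf_succ (a : ℕ → ℝ) {k : ℕ} (hk : 1 ≤ k) : alphaOf a (k + 1) = alphaOf a k + a k :=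
  Finset.sum_Ico_succ_top hk a

lemma iterate_affine_eq {R : Type*} [CommSemiring R] (c b : R) (m : ℕ) :
    (fun x => c * x + b)^[m] = fun x => c ^ m * x + (fun x => c * x + b)^[m] 0 := by
  induction m with
  | zero => funext x; simp
  | succ m ih =>
    funext x
    rw [Function.iterate_succ_apply', Function.iterate_succ_apply', ih]
    ring

lemma volume_iterate_affine_image_Icc {c : ℝ} (hc : 0 < c) (b : ℝ) (m : ℕ) :
    volume ((fun x => c * x + b)^[m] '' Icc (0 : ℝ) 1) = ENNReal.ofReal (c ^ m) := by
  rw [iterate_affine_eq, image_affine_Icc' (pow_pos hc m), Real.volume_Icc]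
  congr 1
  ring

lemma ae_comp_sub_div {P : ℝ → Prop} (h : ∀ᵐ y, P y) (b : ℝ) {c : ℝ} (hc : c ≠ 0) :
    ∀ᵐ x, P ((x - b) / c) := by
  have hT : Measure.QuasiMeasurePreserving (fun x : ℝ => (x - b) / c) volume volume := by
    convert (Measure.quasiMeasurePreserving_smul volume (inv_ne_zero hc)).comp
      (measurePreserving_sub_right volume b).quasiMeasurePreserving using 1
    funext x
    simp [div_eq_inv_mul]
  exact hT.ae h

section SimilarityOperator

variable {n : ℕ} {a d β : ℕ → ℝ} {khat : ℕ}

lemma simOp_apply_congr (hd0 : ∀ k ∈ Finset.Icc 1 n, k ≠ khat → d k = 0) {g h : ℝ → ℝ} {x : ℝ}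
    (hgh : x ∈ Ioo (alphaOf a khat) (alphaOf a (khat + 1)) →
      g ((x - alphaOf a khat) / a khat) = h ((x - alphaOf a khat) / a khat)) :
    simOp n a d β g x = simOp n a d β h x := by
  refine Finset.sum_congr rfl fun k hk => ?_
  by_cases hkk : k = khat
  · subst hkk
    by_cases hx : x ∈ Ioo (alphaOf a k) (alphaOf a (k + 1))
    · simp only [indicator_of_mem hx, hgh hx]
    · simp only [indicator_of_notMem hx]
  · simp only [hd0 k hk hkk, zero_mul, add_zero]

variable {f : ℝ → ℝ}

lemma simOp_ae_eq_off_image (hk1 : 1 ≤ khat) (haK : 0 < a khat)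
    (hd0 : ∀ k ∈ Finset.Icc 1 n, k ≠ khat → d k = 0)
    (hfix : f =ᵐ[volume.restrict (Icc (0 : ℝ) 1)] simOp n a d β f)
    {J : Set ℝ} (hJ : IsCompact J) {h : ℝ → ℝ} (hfh : f =ᵐ[volume.restrict (Icc (0 : ℝ) 1 \ J)] h) :
    f =ᵐ[volume.restrict (Icc (0 : ℝ) 1 \ (fun x => a khat * x + alphaOf a khat) '' J)]
      simOp n a d β h := by
  have hSJ : IsCompact ((fun x => a khat * x + alphaOf a khat) '' J) := hJ.image (by fun_prop)
  have hpre := ae_comp_sub_div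
    ((ae_restrict_iff' (measurableSet_Icc.diff hJ.measurableSet)).1 hfh) (alphaOf a khat) haK.ne'
  refine EventuallyEq.trans (ae_restrict_of_ae_restrict_of_subset sdiff_subset hfix) ?_
  filter_upwards [ae_restrict_mem (measurableSet_Icc.diff hSJ.measurableSet),
    ae_restrict_of_ae hpre] with x hx hxpre
  refine simOp_apply_congr hd0 fun hxI => hxpre ⟨?_, fun hxJ => hx.2 ⟨_, hxJ, ?_⟩⟩
  · rw [alphaOf_succ a hk1] at hxI
    refine Ioo_subset_Icc_self ⟨div_pos ?_ haK, (div_lt_one haK).2 ?_⟩ <;> linarith [hxI.1, hxI.2]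
  · field_simp
    ring

lemma ae_eq_simOp_iterate_off_image_iterate (hk1 : 1 ≤ khat) (haK : 0 < a khat)
    (hd0 : ∀ k ∈ Finset.Icc 1 n, k ≠ khat → d k = 0)
    (hfix : f =ᵐ[volume.restrict (Icc (0 : ℝ) 1)] simOp n a d β f) (h₀ : ℝ → ℝ) (m : ℕ) :
    f =ᵐ[volume.restrict
        (Icc (0 : ℝ) 1 \ (fun x => a khat * x + alphaOf a khat)^[m] '' Icc (0 : ℝ) 1)]
      (simOp n a d β)^[m] h₀ := by
  induction m with
  | zero => simp [EventuallyEq]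
  | succ m ih =>
    rw [Function.iterate_succ', image_comp, Function.iterate_succ']
    exact simOp_ae_eq_off_image hk1 haK hd0 hfix
      (isCompact_Icc.image ((by fun_prop : Continuous _).iterate m)) ih

end SimilarityOperator

theorem selfSimilar_zeroOrder_eq_iterate_off_nested_general
    (n : ℕ) (a d β : ℕ → ℝ)
    (ha : ∀ k ∈ Finset.Icc 1 n, 0 < a k)
    (khat : ℕ) (hk : khat ∈ Finset.Icc 1 n)
    (hd0 : ∀ k ∈ Finset.Icc 1 n, k ≠ khat → d k = 0)
    (f : ℝ → ℝ)
    (hfix : f =ᵐ[volume.restrict (Set.Icc (0:ℝ) 1)] simOp n a d β f)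
    (S : ℝ → ℝ) (hS : S = fun x => a khat * x + alphaOf a khat) :
    ∀ m : ℕ, 1 ≤ m →
      volume ((S^[m]) '' Set.Icc (0:ℝ) 1) = ENNReal.ofReal (a khat ^ m) ∧
      f =ᵐ[volume.restrict (Set.Icc (0:ℝ) 1 \ (S^[m]) '' Set.Icc (0:ℝ) 1)]
        (simOp n a d β)^[m] (fun _ => (0:ℝ)) := by
  subst hS
  intro m _
  have haK := ha khat hk
  exact ⟨volume_iterate_affine_image_Icc haK _ m,
    ae_eq_simOp_iterate_off_image_iterate (Finset.mem_Icc.1 hk).1 haK hd0 hfix _ m⟩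

/-- for every `m ≥ 1`, a self-similar function of zero spectral order
coincides a.e. with the `m`-th iterate `G^m(0)` outside the nested interval
`S^m([0,1])` (which has length `a_{k̂}^m`), where `S(x) = a_{k̂} x + α_{k̂}`. -/
theorem selfSimilar_zeroOrder_eq_iterate_off_nested
    (n : ℕ) (hn : 1 < n) (a d β : ℕ → ℝ)
    (ha : ∀ k ∈ Finset.Icc 1 n, 0 < a k)
    (hsum : ∑ k ∈ Finset.Icc 1 n, a k = 1)
    (p : ℝ≥0∞) (hp1 : 1 ≤ p) (hpt : p ≠ ⊤)
    (khat : ℕ) (hk : khat ∈ Finset.Icc 1 n)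
    (hdk : d khat ≠ 0)
    (hd0 : ∀ k ∈ Finset.Icc 1 n, k ≠ khat → d k = 0)
    (hβ : ∃ k ∈ Finset.Icc 1 n, β k ≠ 0)
    (hcontr : a khat * |d khat| ^ p.toReal < 1)
    (f : ℝ → ℝ) (hf : MemLp f p (volume.restrict (Set.Icc (0:ℝ) 1)))
    (hfix : f =ᵐ[volume.restrict (Set.Icc (0:ℝ) 1)] simOp n a d β f)
    (S : ℝ → ℝ) (hS : S = fun x => a khat * x + alphaOf a khat) :
    ∀ m : ℕ, 1 ≤ m →
      volume ((S^[m]) '' Set.Icc (0:ℝ) 1) = ENNReal.ofReal (a khat ^ m) ∧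
      f =ᵐ[volume.restrict (Set.Icc (0:ℝ) 1 \ (S^[m]) '' Set.Icc (0:ℝ) 1)]
        (simOp n a d β)^[m] (fun _ => (0:ℝ)) :=
  selfSimilar_zeroOrder_eq_iterate_off_nested_general n a d β ha khat hk hd0 f hfix S hS
end

section
/- Let f ∈ L_p[0,1] (1 ≤ p < ∞) be self-similar of zero spectral order with d_{k̂} ≠ 1. Then for every m ≥ 1 and every index i ≠ k̂, f equals the constant d_{k̂}^{m−1}·(β_{k̂}/(d_{k̂}−1) + β_i) − β_{k̂}/(d_{k̂}−1) almost everywhere on the interval I(m,i) = S^{m−1}([α_i, α_{i+1}]), where S(x) = a_{k̂}x + α_{k̂}. -/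
/-!
On the `k̂`-th piece `[α_{k̂}, α_{k̂+1}] = S([0,1])` the fixed-point equation reads
`f(S y) = β_{k̂} + d_{k̂} f(y)`, while on every other piece `d_i = 0` makes `f ≡ β_i`.
Transporting a.e. equalities along the affine bijection `S` (which preserves null sets), the
constant `C` taken by `f` on a set `s ⊆ [0,1]` becomes the constant `β_{k̂} + d_{k̂} C` on `S(s)`.
Starting from `C = β_i` on `[α_i, α_{i+1}]`, the value on `I(m,i)` is the `(m-1)`-st iterate of
`C ↦ β_{k̂} + d_{k̂} C`, whose closed form has fixed point `-β_{k̂}/(d_{k̂}-1)`.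
-/

open MeasureTheory Set Filter
open scoped ENNReal NNReal

section Breakpoints

variable {n : ℕ} {a : ℕ → ℝ}

@[simp]
lemma alphaOf_one : alphaOf a 1 = 0 := by
  simp [alphaOf]

lemma alphaOf_add_one {k : ℕ} (hk : 1 ≤ k) : alphaOf a (k + 1) = alphaOf a k + a k :=
  Finset.sum_Ico_succ_top hk a

lemma alphaOf_mono (ha : ∀ k ∈ Finset.Icc 1 n, 0 ≤ a k) {j k : ℕ} (hjk : j ≤ k)
    (hk : k ≤ n + 1) : alphaOf a j ≤ alphaOf a k := by
  refine Finset.sum_le_sum_of_subset_of_nonneg (Finset.Ico_subset_Ico_right hjk) ?_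
  intro i hi _
  obtain ⟨hi1, hik⟩ := Finset.mem_Ico.mp hi
  exact ha i (Finset.mem_Icc.mpr ⟨hi1, by omega⟩)

lemma alphaOf_add_one_eq_one (hsum : ∑ k ∈ Finset.Icc 1 n, a k = 1) : alphaOf a (n + 1) = 1 :=
  hsum

lemma Icc_alphaOf_subset_Icc_zero_one (ha : ∀ k ∈ Finset.Icc 1 n, 0 ≤ a k)
    (hsum : ∑ k ∈ Finset.Icc 1 n, a k = 1) {k : ℕ} (hk : k ∈ Finset.Icc 1 n) :
    Icc (alphaOf a k) (alphaOf a (k + 1)) ⊆ Icc 0 1 := by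
  obtain ⟨hk1, hkn⟩ := Finset.mem_Icc.mp hk
  have h0 : 0 ≤ alphaOf a k := alphaOf_one (a := a) ▸ alphaOf_mono ha hk1 (by omega)
  have h1 : alphaOf a (k + 1) ≤ 1 :=
    alphaOf_add_one_eq_one hsum ▸ alphaOf_mono ha (by omega) le_rfl
  exact Icc_subset_Icc h0 h1

lemma simOp_eq_of_mem_Ioo (ha : ∀ k ∈ Finset.Icc 1 n, 0 ≤ a k) (d β : ℕ → ℝ) (f : ℝ → ℝ)
    {k : ℕ} (hk : k ∈ Finset.Icc 1 n) {x : ℝ} (hx : x ∈ Ioo (alphaOf a k) (alphaOf a (k + 1))) :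
    simOp n a d β f x = β k + d k * f ((x - alphaOf a k) / a k) := by
  obtain ⟨hk1, hkn⟩ := Finset.mem_Icc.mp hk
  refine (Finset.sum_eq_single_of_mem k hk fun j hj hjk => indicator_of_notMem ?_ _).trans
    (indicator_of_mem hx _)
  intro hxj
  obtain ⟨hj1, hjn⟩ := Finset.mem_Icc.mp hj
  rcases hjk.lt_or_gt with hlt | hgt
  · linarith [hxj.2, hx.1, alphaOf_mono ha (Nat.succ_le_of_lt hlt) (by omega)]
  · linarith [hxj.1, hx.2, alphaOf_mono ha (Nat.succ_le_of_lt hgt) (by omega)]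

lemma ae_eq_on_Icc_alphaOf_of_ae_eq_simOp (ha : ∀ k ∈ Finset.Icc 1 n, 0 ≤ a k)
    (hsum : ∑ k ∈ Finset.Icc 1 n, a k = 1) {d β : ℕ → ℝ} {f : ℝ → ℝ}
    (hfix : f =ᵐ[volume.restrict (Icc (0 : ℝ) 1)] simOp n a d β f)
    {k : ℕ} (hk : k ∈ Finset.Icc 1 n) :
    f =ᵐ[volume.restrict (Icc (alphaOf a k) (alphaOf a (k + 1)))]
      fun x => β k + d k * f ((x - alphaOf a k) / a k) := by
  rw [← Measure.restrict_congr_set Ioo_ae_eq_Icc]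
  have hsub := Ioo_subset_Icc_self.trans (Icc_alphaOf_subset_Icc_zero_one ha hsum hk)
  filter_upwards [ae_restrict_of_ae_restrict_of_subset hsub hfix,
    ae_restrict_mem measurableSet_Ioo] with x hfx hx
  rw [hfx, simOp_eq_of_mem_Ioo ha d β f hk hx]

end Breakpoints

lemma quasiMeasurePreserving_affine_inv {c : ℝ} (hc : c ≠ 0) (b : ℝ) :
    Measure.QuasiMeasurePreserving (fun y : ℝ => (y - b) / c) volume volume := by
  convert (Measure.quasiMeasurePreserving_smul volume (inv_ne_zero hc)).comp
    (measurePreserving_add_right volume (-b)).quasiMeasurePreserving using 1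
  ext y
  simp [div_eq_inv_mul, sub_eq_add_neg]

lemma image_affine_eq_preimage {c : ℝ} (hc : c ≠ 0) (b : ℝ) (s : Set ℝ) :
    (fun x => c * x + b) '' s = (fun y => (y - b) / c) ⁻¹' s := by
  ext y
  constructor
  · rintro ⟨x, hx, rfl⟩
    simpa [hc] using hx
  · intro hy
    exact ⟨(y - b) / c, hy, by field_simp; ring⟩

lemma ae_eq_const_on_affine_image {f : ℝ → ℝ} {c b β d C : ℝ} (hc : c ≠ 0) {s t : Set ℝ}
    (hs : MeasurableSet s)
    (hft : f =ᵐ[volume.restrict t] fun x => β + d * f ((x - b) / c))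
    (hfs : f =ᵐ[volume.restrict s] fun _ => C)
    (hst : (fun x => c * x + b) '' s ⊆ t) :
    f =ᵐ[volume.restrict ((fun x => c * x + b) '' s)] fun _ => β + d * C := by
  have hT := quasiMeasurePreserving_affine_inv hc b
  rw [image_affine_eq_preimage hc] at hst ⊢
  have hpre : ∀ᵐ y ∂volume, (y - b) / c ∈ s → f ((y - b) / c) = C :=
    hT.ae ((ae_restrict_iff' hs).1 hfs)
  filter_upwards [ae_restrict_of_ae_restrict_of_subset hst hft,
    (ae_restrict_iff' (hs.preimage hT.measurable)).2 hpre] with y hy hyC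
  rw [hy, hyC]

lemma ae_eq_const_on_iterate_affine_image {f : ℝ → ℝ} {c b β d C : ℝ} (hc : c ≠ 0)
    {s t u : Set ℝ} (hs : IsCompact s)
    (hft : f =ᵐ[volume.restrict t] fun x => β + d * f ((x - b) / c))
    (hfs : f =ᵐ[volume.restrict s] fun _ => C)
    (hsu : s ⊆ u) (hut : MapsTo (fun x => c * x + b) u t) (htu : t ⊆ u) (M : ℕ) :
    f =ᵐ[volume.restrict ((fun x => c * x + b)^[M] '' s)]
      fun _ => (fun y => β + d * y)^[M] C := by
  induction M with
  | zero => simpa using hfs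
  | succ M ih =>
    have hcont : Continuous (fun x : ℝ => c * x + b)^[M] := by fun_prop
    have hMu : (fun x => c * x + b)^[M] '' s ⊆ u :=
      (image_mono hsu).trans ((hut.mono_right htu).iterate M).image_subset
    rw [Function.iterate_succ', image_comp, Function.iterate_succ_apply']
    exact ae_eq_const_on_affine_image hc (hs.image hcont).measurableSet hft ih
      ((image_mono hMu).trans hut.image_subset)

lemma iterate_affine_apply {β d : ℝ} (hd : d ≠ 1) (M : ℕ) (C : ℝ) :
    (fun y => β + d * y)^[M] C = d ^ M * (β / (d - 1) + C) - β / (d - 1) := by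
  have hd' : d - 1 ≠ 0 := sub_ne_zero.mpr hd
  induction M with
  | zero => simp
  | succ M ih =>
    rw [Function.iterate_succ_apply', ih]
    field_simp
    ring

theorem selfSimilar_zeroOrder_const_on_Imi_general
    (n : ℕ) (a d β : ℕ → ℝ)
    (ha : ∀ k ∈ Finset.Icc 1 n, 0 < a k)
    (hsum : ∑ k ∈ Finset.Icc 1 n, a k = 1)
    (khat : ℕ) (hk : khat ∈ Finset.Icc 1 n)
    (hd0 : ∀ k ∈ Finset.Icc 1 n, k ≠ khat → d k = 0)
    (f : ℝ → ℝ)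
    (hfix : f =ᵐ[volume.restrict (Set.Icc (0:ℝ) 1)] simOp n a d β f)
    (hdne : d khat ≠ 1)
    (S : ℝ → ℝ) (hS : S = fun x => a khat * x + alphaOf a khat) :
    ∀ m : ℕ, 1 ≤ m → ∀ i ∈ Finset.Icc 1 n, i ≠ khat →
      f =ᵐ[volume.restrict ((S^[m - 1]) '' Set.Icc (alphaOf a i) (alphaOf a (i + 1)))]
        (fun _ => d khat ^ (m - 1) * (β khat / (d khat - 1) + β i) - β khat / (d khat - 1)) := by
  intro m _ i hi hine
  subst hS
  have ha' : ∀ k ∈ Finset.Icc 1 n, 0 ≤ a k := fun k hk => (ha k hk).le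
  have hpiece k (hk : k ∈ Finset.Icc 1 n) := ae_eq_on_Icc_alphaOf_of_ae_eq_simOp ha' hsum hfix hk
  have hbase : f =ᵐ[volume.restrict (Icc (alphaOf a i) (alphaOf a (i + 1)))] fun _ => β i := by
    filter_upwards [hpiece i hi] with x hx
    simp [hx, hd0 i hi hine]
  have hS01 : MapsTo (fun x => a khat * x + alphaOf a khat) (Icc 0 1)
      (Icc (alphaOf a khat) (alphaOf a (khat + 1))) := by
    intro x ⟨hx0, hx1⟩
    rw [alphaOf_add_one (Finset.mem_Icc.mp hk).1]
    constructor <;> nlinarith [ha khat hk]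
  simp_rw [← iterate_affine_apply hdne]
  exact ae_eq_const_on_iterate_affine_image (ha khat hk).ne' isCompact_Icc (hpiece khat hk) hbase
    (Icc_alphaOf_subset_Icc_zero_one ha' hsum hi) hS01
    (Icc_alphaOf_subset_Icc_zero_one ha' hsum hk) (m - 1)

/-- if `d_{k̂} ≠ 1`, then on each interval `I(m,i) = S^{m−1}([α_i, α_{i+1}])`
(`i ≠ k̂`, `m ≥ 1`) the self-similar function of zero spectral order is a.e. equal to the
constant `d_{k̂}^{m−1}(β_{k̂}/(d_{k̂}−1) + β_i) − β_{k̂}/(d_{k̂}−1)`. -/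
theorem selfSimilar_zeroOrder_const_on_Imi
    (n : ℕ) (hn : 1 < n) (a d β : ℕ → ℝ)
    (ha : ∀ k ∈ Finset.Icc 1 n, 0 < a k)
    (hsum : ∑ k ∈ Finset.Icc 1 n, a k = 1)
    (p : ℝ≥0∞) (hp1 : 1 ≤ p) (hpt : p ≠ ⊤)
    (khat : ℕ) (hk : khat ∈ Finset.Icc 1 n)
    (hdk : d khat ≠ 0)
    (hd0 : ∀ k ∈ Finset.Icc 1 n, k ≠ khat → d k = 0)
    (hβ : ∃ k ∈ Finset.Icc 1 n, β k ≠ 0)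
    (hcontr : a khat * |d khat| ^ p.toReal < 1)
    (f : ℝ → ℝ) (hf : MemLp f p (volume.restrict (Set.Icc (0:ℝ) 1)))
    (hfix : f =ᵐ[volume.restrict (Set.Icc (0:ℝ) 1)] simOp n a d β f)
    (hdne : d khat ≠ 1)
    (S : ℝ → ℝ) (hS : S = fun x => a khat * x + alphaOf a khat) :
    ∀ m : ℕ, 1 ≤ m → ∀ i ∈ Finset.Icc 1 n, i ≠ khat →
      f =ᵐ[volume.restrict ((S^[m - 1]) '' Set.Icc (alphaOf a i) (alphaOf a (i + 1)))]
        (fun _ => d khat ^ (m - 1) * (β khat / (d khat - 1) + β i) - β khat / (d khat - 1)) :=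
  selfSimilar_zeroOrder_const_on_Imi_general n a d β ha hsum khat hk hd0 f hfix hdne S hS
end
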